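/- arXiv:1204.5894 — 2 statements merged into one kernel-verified Lean document; each statement's English description precedes it below -/
import Mathlib

section
/- For every integer n ≥ 1, every α ∈ (0,1), and every p ∈ (0,1): ∑_{X : p_U(X,α) < p} C(n,X) p^X (1-p)^{n-X} ≤ α/2, i.e. the probability (under X ~ Binomial(n,p)) that the Clopper–Pearson upper endpoint lies strictly below the true p is at most α/2. -/
open MeasureTheory

/-- The Beta function `β(r,s) = ∫₀¹ t^(r-1) (1-t)^(s-1) dt`. -/
noncomputable def betaFun (r s : ℝ) : ℝ :=
  ∫ t in (0:ℝ)..1, t ^ (r - 1) * (1 - t) ^ (s - 1)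

/-- The Beta(r,s) density `f(t;r,s) = t^(r-1)(1-t)^(s-1)/β(r,s)`. -/
noncomputable def betaPDF (r s t : ℝ) : ℝ :=
  t ^ (r - 1) * (1 - t) ^ (s - 1) / betaFun r s

/-- The Beta(r,s) cumulative distribution function `∫₀ᵖ f(t;r,s) dt`. -/
noncomputable def betaCDF (r s p : ℝ) : ℝ :=
  ∫ t in (0:ℝ)..p, betaPDF r s t

/- The Beta quantile `B(q;r,s)`: the (unique, for `r,s>0`, `q∈(0,1)`) `t ∈ (0,1)`
with `∫₀ᵗ f(u;r,s) du = q`. -/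
open Classical in
noncomputable def betaQuantile (r s q : ℝ) : ℝ :=
  if h : ∃ t, t ∈ Set.Ioo (0:ℝ) 1 ∧ betaCDF r s t = q then h.choose else 0

/-- Lower Clopper–Pearson endpoint: `p_L(X,α) = B(α/2; X, n-X+1)` for `X ≥ 1`,
and `p_L(0,α) = 0`. -/
noncomputable def cpLower (n X : ℕ) (α : ℝ) : ℝ :=
  if X = 0 then 0 else betaQuantile (X : ℝ) ((n : ℝ) - X + 1) (α / 2)

/-- Upper Clopper–Pearson endpoint: `p_U(X,α) = B(1-α/2; X+1, n-X)` for `X ≤ n-1`,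
and `p_U(n,α) = 1`. -/
noncomputable def cpUpper (n X : ℕ) (α : ℝ) : ℝ :=
  if X = n then 1 else betaQuantile ((X : ℝ) + 1) ((n : ℝ) - X) (1 - α / 2)

/-- The binomial probability `b(X;n,p) = C(n,X) p^X (1-p)^(n-X)`. -/
noncomputable def binomPMF (n X : ℕ) (p : ℝ) : ℝ :=
  (n.choose X : ℝ) * p ^ X * (1 - p) ^ (n - X)

/-! ### Auxiliary development -/

/-- The (unnormalized) incomplete beta integral with natural exponents. -/
noncomputable def polyI (n k : ℕ) (p : ℝ) : ℝ :=
  ∫ t in (0:ℝ)..p, t ^ k * (1 - t) ^ (n - 1 - k)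

lemma polyI_cont (n k : ℕ) : Continuous fun t : ℝ => t ^ k * (1 - t) ^ (n - 1 - k) := by
  fun_prop

lemma polyI_hasDerivAt (n k : ℕ) (p : ℝ) :
    HasDerivAt (polyI n k) (p ^ k * (1 - p) ^ (n - 1 - k)) p :=
  ((polyI_cont n k).integral_hasStrictDerivAt 0 p).hasDerivAt

open Polynomial in
lemma bern_deriv_sum (n k : ℕ) :
    Polynomial.derivative (∑ X ∈ Finset.range (k + 1), bernsteinPolynomial ℝ n X)
      = -(n : ℝ[X]) * bernsteinPolynomial ℝ (n - 1) k := by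
  induction k with
  | zero => simpa using bernsteinPolynomial.derivative_zero ℝ n
  | succ k ih =>
      rw [Finset.sum_range_succ, map_add, ih, bernsteinPolynomial.derivative_succ]
      ring

lemma key_sum_eq (n k : ℕ) (hk : k < n) (p : ℝ) :
    ∑ X ∈ Finset.range (k + 1), binomPMF n X p
      = 1 - (n : ℝ) * ((n - 1).choose k : ℝ) * polyI n k p := by
  set P : Polynomial ℝ := ∑ X ∈ Finset.range (k + 1), bernsteinPolynomial ℝ n X with hP
  set c : ℝ := (n : ℝ) * ((n - 1).choose k : ℝ) with hc
  have hg : ∀ x : ℝ, HasDerivAt (fun y => P.eval y + c * polyI n k y) 0 x := by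
    intro x
    have h1 := P.hasDerivAt x
    have h2 := (polyI_hasDerivAt n k x).const_mul c
    have h3 := h1.add h2
    have he : Polynomial.eval x (Polynomial.derivative P)
        + c * (x ^ k * (1 - x) ^ (n - 1 - k)) = 0 := by
      rw [hP, bern_deriv_sum]
      simp only [bernsteinPolynomial, Polynomial.eval_mul, Polynomial.eval_neg,
        Polynomial.eval_natCast, Polynomial.eval_pow, Polynomial.eval_X,
        Polynomial.eval_sub, Polynomial.eval_one, hc]
      ring
    rw [← he]
    exact h3
  have hconst := is_const_of_deriv_eq_zero (f := fun y => P.eval y + c * polyI n k y)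
      (fun x => (hg x).differentiableAt) (fun x => (hg x).deriv) p 0
  have h0 : P.eval 0 = 1 := by
    rw [hP, Polynomial.eval_finset_sum]
    simp [bernsteinPolynomial.eval_at_0]
  have hI0 : polyI n k 0 = 0 := intervalIntegral.integral_same
  have hsum : ∑ X ∈ Finset.range (k + 1), binomPMF n X p = P.eval p := by
    rw [hP, Polynomial.eval_finset_sum]
    refine Finset.sum_congr rfl fun X _ => ?_
    simp [binomPMF, bernsteinPolynomial, mul_comm]
  simp only [hI0, mul_zero, add_zero, h0] at hconst
  rw [hsum]
  linarith

lemma key_one (n k : ℕ) (hk : k < n) :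
    (n : ℝ) * ((n - 1).choose k : ℝ) * polyI n k 1 = 1 := by
  have h := key_sum_eq n k hk 1
  have hz : ∑ X ∈ Finset.range (k + 1), binomPMF n X 1 = 0 := by
    refine Finset.sum_eq_zero fun X hX => ?_
    have hXn : X < n := lt_of_lt_of_le (Finset.mem_range.mp hX) hk
    simp [binomPMF, zero_pow, Nat.sub_ne_zero_of_lt hXn]
  linarith

lemma polyI_one_pos (n k : ℕ) (hk : k < n) : 0 < polyI n k 1 := by
  have h := key_one n k hk
  have hc : (0:ℝ) ≤ (n : ℝ) * ((n - 1).choose k : ℝ) := by positivity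
  nlinarith [h, hc]

lemma betaCDF_eq (n k : ℕ) (hk : k < n) (p : ℝ) :
    betaCDF ((k : ℝ) + 1) ((n : ℝ) - k) p
      = (n : ℝ) * ((n - 1).choose k : ℝ) * polyI n k p := by
  have hfun : ∀ t : ℝ, t ^ ((k : ℝ) + 1 - 1) * (1 - t) ^ ((n : ℝ) - k - 1)
      = t ^ k * (1 - t) ^ (n - 1 - k) := by
    intro t
    have h1 : (k : ℝ) + 1 - 1 = ((k : ℕ) : ℝ) := by ring
    have h2 : (n : ℝ) - k - 1 = ((n - 1 - k : ℕ) : ℝ) := by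
      have h3 : n - 1 - k = n - (k + 1) := by omega
      rw [h3, Nat.cast_sub (by omega)]
      push_cast
      ring
    rw [h1, h2, Real.rpow_natCast, Real.rpow_natCast]
  have hbf : betaFun ((k : ℝ) + 1) ((n : ℝ) - k) = polyI n k 1 := by
    rw [betaFun, polyI]
    simp only [hfun]
  have hI1 : polyI n k 1 ≠ 0 := ne_of_gt (polyI_one_pos n k hk)
  have hkey := key_one n k hk
  rw [betaCDF]
  simp only [betaPDF, hbf, hfun]
  rw [intervalIntegral.integral_div]
  rw [show (∫ t in (0:ℝ)..p, t ^ k * (1 - t) ^ (n - 1 - k)) = polyI n k p from rfl]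
  field_simp
  linear_combination (-polyI n k p) * hkey

lemma polyI_strict (n k : ℕ) {a b : ℝ} (ha : 0 ≤ a) (hab : a < b) (hb : b ≤ 1) :
    polyI n k a < polyI n k b := by
  have hint : polyI n k b - polyI n k a = ∫ t in a..b, t ^ k * (1 - t) ^ (n - 1 - k) := by
    rw [polyI, polyI,
      intervalIntegral.integral_interval_sub_left ((polyI_cont n k).intervalIntegrable 0 b)
        ((polyI_cont n k).intervalIntegrable 0 a)]
  have hpos : 0 < ∫ t in a..b, t ^ k * (1 - t) ^ (n - 1 - k) := by
    refine intervalIntegral.intervalIntegral_pos_of_pos_on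
      ((polyI_cont n k).intervalIntegrable a b) (fun x hx => ?_) hab
    have hx0 : 0 < x := lt_of_le_of_lt ha hx.1
    have hx1 : 0 < 1 - x := by
      have := hx.2
      have : x < 1 := lt_of_lt_of_le hx.2 hb
      linarith
    exact mul_pos (pow_pos hx0 k) (pow_pos hx1 _)
  linarith

lemma polyI_continuous (n k : ℕ) : Continuous (polyI n k) := by
  have : Differentiable ℝ (polyI n k) := fun x => (polyI_hasDerivAt n k x).differentiableAt
  exact this.continuous

lemma quantile_exists (n k : ℕ) (hk : k < n) (q : ℝ) (hq : q ∈ Set.Ioo (0:ℝ) 1) :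
    ∃ t, t ∈ Set.Ioo (0:ℝ) 1 ∧ betaCDF ((k : ℝ) + 1) ((n : ℝ) - k) t = q := by
  set F : ℝ → ℝ := fun t => (n : ℝ) * ((n - 1).choose k : ℝ) * polyI n k t with hF
  have hFc : Continuous F := continuous_const.mul (polyI_continuous n k)
  have hF0 : F 0 = 0 := by simp [hF, polyI, intervalIntegral.integral_same]
  have hF1 : F 1 = 1 := key_one n k hk
  have hsub := intermediate_value_Ioo (zero_le_one (α := ℝ)) hFc.continuousOn
  rw [hF0, hF1] at hsub
  obtain ⟨t, ht, hFt⟩ := hsub hq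
  exact ⟨t, ht, by rw [betaCDF_eq n k hk]; exact hFt⟩

lemma binomPMF_nonneg (n X : ℕ) {p : ℝ} (hp : 0 ≤ p) (hp1 : p ≤ 1) : 0 ≤ binomPMF n X p := by
  have : (0:ℝ) ≤ 1 - p := by linarith
  unfold binomPMF
  positivity

open Classical in
/-- The probability that the Clopper–Pearson upper endpoint lies strictly below the true `p`
is at most `α/2`. -/
theorem clopperPearson_upper_noncoverage (n : ℕ) (hn : 1 ≤ n) (α : ℝ) (hα : α ∈ Set.Ioo (0:ℝ) 1)
    (p : ℝ) (hp : p ∈ Set.Ioo (0:ℝ) 1) :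
    ∑ X ∈ Finset.range (n + 1), (if cpUpper n X α < p then binomPMF n X p else 0) ≤ α / 2 := by
  obtain ⟨hα0, hα1⟩ := hα
  obtain ⟨hp0, hp1⟩ := hp
  set S : Finset ℕ := (Finset.range (n + 1)).filter (fun X => cpUpper n X α < p) with hS
  by_cases hSe : S.Nonempty
  · set k : ℕ := S.max' hSe with hkdef
    have hkS : k ∈ S := S.max'_mem hSe
    have hkr : k ∈ Finset.range (n + 1) := Finset.mem_filter.mp hkS |>.1
    have hkp : cpUpper n k α < p := (Finset.mem_filter.mp hkS).2
    have hkn : k ≠ n := by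
      intro h
      rw [h] at hkp
      simp [cpUpper] at hkp
      linarith
    have hklt : k < n := lt_of_le_of_ne (Nat.lt_succ_iff.mp (Finset.mem_range.mp hkr)) hkn
    have hq : (1 - α / 2) ∈ Set.Ioo (0:ℝ) 1 := ⟨by linarith, by linarith⟩
    have hex := quantile_exists n k hklt (1 - α / 2) hq
    have hcp : cpUpper n k α = hex.choose := by
      rw [cpUpper, if_neg hkn, betaQuantile, dif_pos hex]
    obtain ⟨ht01, htCDF⟩ := hex.choose_spec
    have htp : hex.choose < p := by rw [hcp] at hkp; exact hkp
    have hmono : polyI n k hex.choose < polyI n k p :=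
      polyI_strict n k (le_of_lt ht01.1) htp (le_of_lt hp1)
    have hCDFt := betaCDF_eq n k hklt hex.choose
    have hCDFp := betaCDF_eq n k hklt p
    have hcpos : (0:ℝ) < (n : ℝ) * ((n - 1).choose k : ℝ) := by
      have h1 : 0 < (n - 1).choose k := Nat.choose_pos (by omega)
      have h2 : 0 < n := by omega
      positivity
    have hgt : 1 - α / 2 < (n : ℝ) * ((n - 1).choose k : ℝ) * polyI n k p := by
      rw [← htCDF, hCDFt]
      nlinarith
    have hsum := key_sum_eq n k hklt p
    have hstep : ∑ X ∈ Finset.range (n + 1), (if cpUpper n X α < p then binomPMF n X p else 0)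
        ≤ ∑ X ∈ Finset.range (k + 1), binomPMF n X p := by
      have hfe : Finset.range (k + 1) = (Finset.range (n + 1)).filter (fun X => X ≤ k) := by
        ext X
        simp only [Finset.mem_range, Finset.mem_filter, Nat.lt_succ_iff]
        omega
      rw [hfe, Finset.sum_filter]
      refine Finset.sum_le_sum fun X hX => ?_
      by_cases hc1 : cpUpper n X α < p
      · have hXk : X ≤ k := Finset.le_max' S X (Finset.mem_filter.mpr ⟨hX, hc1⟩)
        rw [if_pos hc1, if_pos hXk]
      · rw [if_neg hc1]
        by_cases hXk : X ≤ k
        · rw [if_pos hXk]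
          exact binomPMF_nonneg n X (le_of_lt hp0) (le_of_lt hp1)
        · rw [if_neg hXk]
    linarith
  · have : ∀ X ∈ Finset.range (n + 1), (if cpUpper n X α < p then binomPMF n X p else 0) = 0 := by
      intro X hX
      rw [if_neg]
      intro h
      exact hSe ⟨X, Finset.mem_filter.mpr ⟨hX, h⟩⟩
    rw [Finset.sum_congr rfl this]
    simp
    positivity
end

section
/- For every integer n ≥ 1, every integer X with 0 ≤ X ≤ n, and all r, s > 0, the function α ↦ ∫_{p_L(X,α)}^{p_U(X,α)} p^X (1-p)^{n-X} f(p; r, s) dp is continuous and strictly decreasing on (0,1). -/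
open MeasureTheory

/-!
Writing `F` for a primitive of the weight `w(p) = p^X (1-p)^(n-X) f(p; r, s)`, the summand is
`F(p_U(X, α)) - F(p_L(X, α))`. Since `w > 0` on `(0, 1)`, `F` is continuous and strictly increasing
on `[0, 1]`. The Beta quantile is the inverse of the continuous, strictly increasing Beta CDF, so it
is continuous and strictly increasing; hence `p_L` is continuous and nondecreasing in `α`, and
`p_U` continuous and nonincreasing. As `n ≥ 1`, `X = 0` and `X = n` do not hold together, so at
least one endpoint is strictly monotone, which makes the summand strictly decreasing.
-/

open Set intervalIntegral

section Primitive

variable {w : ℝ → ℝ} {a b : ℝ}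

lemma continuousOn_primitive_of_integrableOn (hw : IntegrableOn w (Icc a b)) :
    ContinuousOn (fun x => ∫ t in a..x, w t) (Icc a b) :=
  (continuousOn_primitive hw).congr fun _ hx =>
    integral_of_le hx.1

lemma intervalIntegral_eq_primitive_sub (hw : IntegrableOn w (Icc a b)) {x y : ℝ}
    (hx : x ∈ Icc a b) (hy : y ∈ Icc a b) :
    ∫ t in x..y, w t = (∫ t in a..y, w t) - ∫ t in a..x, w t := by
  have ha : a ∈ Icc a b := left_mem_Icc.2 (hx.1.trans hx.2)
  exact (integral_interval_sub_left
    (hw.mono_set (uIcc_subset_Icc ha hy)).intervalIntegrable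
    (hw.mono_set (uIcc_subset_Icc ha hx)).intervalIntegrable).symm

lemma strictMonoOn_primitive (hw : IntegrableOn w (Icc a b)) (hpos : ∀ t ∈ Ioo a b, 0 < w t) :
    StrictMonoOn (fun x => ∫ t in a..x, w t) (Icc a b) := by
  intro x hx y hy hxy
  have h := intervalIntegral_pos_of_pos_on (hw.mono_set (uIcc_subset_Icc hx hy)).intervalIntegrable
    (fun t ht => hpos t ⟨hx.1.trans_lt ht.1, ht.2.trans_le hy.2⟩) hxy
  rw [intervalIntegral_eq_primitive_sub hw hx hy] at h
  exact sub_pos.1 h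

variable {S : Set ℝ} {L U : ℝ → ℝ}

lemma continuousOn_intervalIntegral_of_endpoints (hw : IntegrableOn w (Icc a b))
    (hL : ContinuousOn L S) (hU : ContinuousOn U S)
    (hLS : MapsTo L S (Icc a b)) (hUS : MapsTo U S (Icc a b)) :
    ContinuousOn (fun α => ∫ t in L α..U α, w t) S :=
  (((continuousOn_primitive_of_integrableOn hw).comp hU hUS).sub
    ((continuousOn_primitive_of_integrableOn hw).comp hL hLS)).congr fun _ hα =>
      intervalIntegral_eq_primitive_sub hw (hLS hα) (hUS hα)

lemma strictAntiOn_intervalIntegral_of_endpoints (hw : IntegrableOn w (Icc a b))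
    (hpos : ∀ t ∈ Ioo a b, 0 < w t) (hL : MonotoneOn L S) (hU : AntitoneOn U S)
    (hLS : MapsTo L S (Icc a b)) (hUS : MapsTo U S (Icc a b))
    (hstrict : StrictMonoOn L S ∨ StrictAntiOn U S) :
    StrictAntiOn (fun α => ∫ t in L α..U α, w t) S := by
  intro α hα β hβ hαβ
  have hF := strictMonoOn_primitive hw hpos
  simp only [intervalIntegral_eq_primitive_sub hw (hLS hα) (hUS hα),
    intervalIntegral_eq_primitive_sub hw (hLS hβ) (hUS hβ)]
  rcases hstrict with hL' | hU'
  · have hlow := hF (hLS hα) (hLS hβ) (hL' hα hβ hαβ)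
    have hup := hF.monotoneOn (hUS hβ) (hUS hα) (hU hα hβ hαβ.le)
    linarith
  · have hlow := hF.monotoneOn (hLS hα) (hLS hβ) (hL hα hβ hαβ.le)
    have hup := hF (hUS hβ) (hUS hα) (hU' hα hβ hαβ)
    linarith

end Primitive

section Beta

variable {r s : ℝ}

lemma intervalIntegrable_betaIntegrand (hr : 0 < r) (hs : 0 < s) :
    IntervalIntegrable (fun t : ℝ => t ^ (r - 1) * (1 - t) ^ (s - 1)) volume 0 1 := by
  have h := Complex.betaIntegral_convergent (u := r) (v := s) (by simpa) (by simpa)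
  rw [intervalIntegrable_iff_integrableOn_Ioc_of_le zero_le_one] at h ⊢
  refine IntegrableOn.congr_fun (Integrable.re h) (fun t ht => ?_) measurableSet_Ioc
  have hcast : (t : ℂ) ^ ((r : ℂ) - 1) * (1 - (t : ℂ)) ^ ((s : ℂ) - 1)
      = ((t ^ (r - 1) * (1 - t) ^ (s - 1) : ℝ) : ℂ) := by
    push_cast [Complex.ofReal_cpow ht.1.le, Complex.ofReal_cpow (sub_nonneg.2 ht.2)]
    rfl
  rw [hcast, RCLike.re_to_complex, Complex.ofReal_re]

lemma betaIntegrand_pos {t : ℝ} (ht : t ∈ Ioo 0 1) : 0 < t ^ (r - 1) * (1 - t) ^ (s - 1) :=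
  mul_pos (Real.rpow_pos_of_pos ht.1 _) (Real.rpow_pos_of_pos (sub_pos.2 ht.2) _)

lemma betaFun_pos (hr : 0 < r) (hs : 0 < s) : 0 < betaFun r s :=
  intervalIntegral_pos_of_pos_on (intervalIntegrable_betaIntegrand hr hs)
    (fun _ ht => betaIntegrand_pos ht) one_pos

lemma betaPDF_pos (hr : 0 < r) (hs : 0 < s) {t : ℝ} (ht : t ∈ Ioo 0 1) : 0 < betaPDF r s t :=
  div_pos (betaIntegrand_pos ht) (betaFun_pos hr hs)

lemma integrableOn_betaPDF (hr : 0 < r) (hs : 0 < s) : IntegrableOn (betaPDF r s) (Icc 0 1) :=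
  (intervalIntegrable_iff_integrableOn_Icc_of_le zero_le_one).1
    ((intervalIntegrable_betaIntegrand hr hs).div_const _)

lemma betaCDF_zero : betaCDF r s 0 = 0 := integral_same

lemma betaCDF_one (hr : 0 < r) (hs : 0 < s) : betaCDF r s 1 = 1 := by
  simp only [betaCDF, betaPDF]
  rw [intervalIntegral.integral_div]
  exact div_self (betaFun_pos hr hs).ne'

lemma continuousOn_betaCDF (hr : 0 < r) (hs : 0 < s) : ContinuousOn (betaCDF r s) (Icc 0 1) :=
  continuousOn_primitive_of_integrableOn (integrableOn_betaPDF hr hs)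

lemma strictMonoOn_betaCDF (hr : 0 < r) (hs : 0 < s) : StrictMonoOn (betaCDF r s) (Icc 0 1) :=
  strictMonoOn_primitive (integrableOn_betaPDF hr hs) fun _ => betaPDF_pos hr hs

lemma betaCDF_mem_Ioo (hr : 0 < r) (hs : 0 < s) {t : ℝ} (ht : t ∈ Ioo 0 1) :
    betaCDF r s t ∈ Ioo 0 1 := by
  have hmono := strictMonoOn_betaCDF hr hs
  constructor
  · simpa [betaCDF_zero] using hmono (left_mem_Icc.2 zero_le_one) (Ioo_subset_Icc_self ht) ht.1
  · simpa [betaCDF_one hr hs] using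
      hmono (Ioo_subset_Icc_self ht) (right_mem_Icc.2 zero_le_one) ht.2

lemma exists_betaCDF_eq (hr : 0 < r) (hs : 0 < s) {q : ℝ} (hq : q ∈ Ioo 0 1) :
    ∃ t ∈ Ioo 0 1, betaCDF r s t = q := by
  have h := intermediate_value_Ioo zero_le_one (continuousOn_betaCDF hr hs)
  rw [betaCDF_zero, betaCDF_one hr hs] at h
  exact h hq

lemma betaQuantile_spec (hr : 0 < r) (hs : 0 < s) {q : ℝ} (hq : q ∈ Ioo 0 1) :
    betaQuantile r s q ∈ Ioo 0 1 ∧ betaCDF r s (betaQuantile r s q) = q := by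
  have h := exists_betaCDF_eq hr hs hq
  rw [betaQuantile, dif_pos h]
  exact h.choose_spec

lemma betaQuantile_betaCDF (hr : 0 < r) (hs : 0 < s) {t : ℝ} (ht : t ∈ Ioo 0 1) :
    betaQuantile r s (betaCDF r s t) = t := by
  have h := betaQuantile_spec hr hs (betaCDF_mem_Ioo hr hs ht)
  exact (strictMonoOn_betaCDF hr hs).injOn (Ioo_subset_Icc_self h.1) (Ioo_subset_Icc_self ht) h.2

lemma strictMonoOn_betaQuantile (hr : 0 < r) (hs : 0 < s) :
    StrictMonoOn (betaQuantile r s) (Ioo 0 1) := by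
  intro p hp q hq hpq
  obtain ⟨hp₀, hp₁⟩ := betaQuantile_spec hr hs hp
  obtain ⟨hq₀, hq₁⟩ := betaQuantile_spec hr hs hq
  rwa [← (strictMonoOn_betaCDF hr hs).lt_iff_lt (Ioo_subset_Icc_self hp₀)
    (Ioo_subset_Icc_self hq₀), hp₁, hq₁]

lemma betaQuantile_image (hr : 0 < r) (hs : 0 < s) : betaQuantile r s '' Ioo 0 1 = Ioo 0 1 := by
  refine Subset.antisymm ?_ fun t ht => ?_
  · rintro _ ⟨q, hq, rfl⟩
    exact (betaQuantile_spec hr hs hq).1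
  · exact ⟨betaCDF r s t, betaCDF_mem_Ioo hr hs ht, betaQuantile_betaCDF hr hs ht⟩

lemma continuousOn_betaQuantile (hr : 0 < r) (hs : 0 < s) :
    ContinuousOn (betaQuantile r s) (Ioo 0 1) := fun q hq =>
  ((strictMonoOn_betaQuantile hr hs).continuousAt_of_image_mem_nhds (isOpen_Ioo.mem_nhds hq)
    (by rw [betaQuantile_image hr hs]
        exact isOpen_Ioo.mem_nhds (betaQuantile_spec hr hs hq).1)).continuousWithinAt

end Beta

section ClopperPearson

variable {n X : ℕ}

lemma half_mem_Ioo {α : ℝ} (hα : α ∈ Ioo 0 1) : α / 2 ∈ Ioo 0 1 :=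
  ⟨by linarith [hα.1], by linarith [hα.2]⟩

lemma one_sub_half_mem_Ioo {α : ℝ} (hα : α ∈ Ioo 0 1) : 1 - α / 2 ∈ Ioo 0 1 :=
  ⟨by linarith [hα.2], by linarith [hα.1]⟩

lemma cpLower_zero : cpLower n 0 = fun _ => 0 :=
  funext fun _ => if_pos rfl

lemma cpUpper_self : cpUpper n n = fun _ => 1 :=
  funext fun _ => if_pos rfl

lemma cpLower_of_ne_zero (hX0 : X ≠ 0) :
    cpLower n X = fun α => betaQuantile X (n - X + 1) (α / 2) :=
  funext fun _ => if_neg hX0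

lemma cpUpper_of_lt (hXn : X < n) :
    cpUpper n X = fun α => betaQuantile (X + 1) (n - X) (1 - α / 2) :=
  funext fun _ => if_neg hXn.ne

lemma cast_sub_add_one_pos (hX : X ≤ n) : (0 : ℝ) < n - X + 1 := by
  linarith [(Nat.cast_le (α := ℝ)).2 hX]

lemma mapsTo_cpLower (hX : X ≤ n) : MapsTo (cpLower n X) (Ioo 0 1) (Icc 0 1) := by
  intro α hα
  rcases eq_or_ne X 0 with rfl | hX0
  · simp [cpLower_zero]
  · rw [cpLower_of_ne_zero hX0]
    exact Ioo_subset_Icc_self (betaQuantile_spec (by positivity) (cast_sub_add_one_pos hX)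
      (half_mem_Ioo hα)).1

lemma mapsTo_cpUpper (hX : X ≤ n) : MapsTo (cpUpper n X) (Ioo 0 1) (Icc 0 1) := by
  intro α hα
  rcases hX.eq_or_lt with rfl | hXn
  · simp [cpUpper_self]
  · rw [cpUpper_of_lt hXn]
    exact Ioo_subset_Icc_self (betaQuantile_spec (by positivity)
      (sub_pos.2 (Nat.cast_lt.2 hXn)) (one_sub_half_mem_Ioo hα)).1

lemma continuousOn_cpLower (hX : X ≤ n) : ContinuousOn (cpLower n X) (Ioo 0 1) := by
  rcases eq_or_ne X 0 with rfl | hX0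
  · rw [cpLower_zero]
    exact continuousOn_const
  · rw [cpLower_of_ne_zero hX0]
    exact (continuousOn_betaQuantile (by positivity) (cast_sub_add_one_pos hX)).comp
      (continuous_id.div_const 2).continuousOn fun _ => half_mem_Ioo

lemma continuousOn_cpUpper (hX : X ≤ n) : ContinuousOn (cpUpper n X) (Ioo 0 1) := by
  rcases hX.eq_or_lt with rfl | hXn
  · rw [cpUpper_self]
    exact continuousOn_const
  · rw [cpUpper_of_lt hXn]
    exact (continuousOn_betaQuantile (by positivity) (sub_pos.2 (Nat.cast_lt.2 hXn))).comp
      (continuous_const.sub (continuous_id.div_const 2)).continuousOn fun _ => one_sub_half_mem_Ioo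

lemma strictMonoOn_cpLower (hX0 : X ≠ 0) (hX : X ≤ n) : StrictMonoOn (cpLower n X) (Ioo 0 1) := by
  intro α hα β hβ hαβ
  rw [cpLower_of_ne_zero hX0]
  exact strictMonoOn_betaQuantile (by positivity) (cast_sub_add_one_pos hX)
    (half_mem_Ioo hα) (half_mem_Ioo hβ) (by linarith)

lemma strictAntiOn_cpUpper (hXn : X < n) : StrictAntiOn (cpUpper n X) (Ioo 0 1) := by
  intro α hα β hβ hαβ
  rw [cpUpper_of_lt hXn]
  exact strictMonoOn_betaQuantile (by positivity) (sub_pos.2 (Nat.cast_lt.2 hXn))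
    (one_sub_half_mem_Ioo hβ) (one_sub_half_mem_Ioo hα) (by linarith)

lemma monotoneOn_cpLower (hX : X ≤ n) : MonotoneOn (cpLower n X) (Ioo 0 1) := by
  rcases eq_or_ne X 0 with rfl | hX0
  · rw [cpLower_zero]
    exact monotoneOn_const
  · exact (strictMonoOn_cpLower hX0 hX).monotoneOn

lemma antitoneOn_cpUpper (hX : X ≤ n) : AntitoneOn (cpUpper n X) (Ioo 0 1) := by
  rcases hX.eq_or_lt with rfl | hXn
  · rw [cpUpper_self]
    exact antitoneOn_const
  · exact (strictAntiOn_cpUpper hXn).antitoneOn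

end ClopperPearson

/-- The summand `α ↦ ∫_{p_L(X,α)}^{p_U(X,α)} p^X (1-p)^(n-X) f(p;r,s) dp` of the mean coverage
is continuous and strictly decreasing on (0,1). -/
theorem meanCoverage_summand_continuous_strictAnti (n X : ℕ) (hn : 1 ≤ n) (hX : X ≤ n)
    (r s : ℝ) (hr : 0 < r) (hs : 0 < s) :
    ContinuousOn
      (fun α : ℝ => ∫ p in (cpLower n X α)..(cpUpper n X α),
        p ^ X * (1 - p) ^ (n - X) * betaPDF r s p) (Set.Ioo (0:ℝ) 1) ∧
    StrictAntiOn
      (fun α : ℝ => ∫ p in (cpLower n X α)..(cpUpper n X α),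
        p ^ X * (1 - p) ^ (n - X) * betaPDF r s p) (Set.Ioo (0:ℝ) 1) := by
  have hw : IntegrableOn (fun p : ℝ => p ^ X * (1 - p) ^ (n - X) * betaPDF r s p) (Icc 0 1) :=
    (integrableOn_betaPDF hr hs).continuousOn_mul (by fun_prop) isCompact_Icc
  have hpos : ∀ p ∈ Ioo (0 : ℝ) 1, 0 < p ^ X * (1 - p) ^ (n - X) * betaPDF r s p := fun p hp =>
    mul_pos (mul_pos (pow_pos hp.1 X) (pow_pos (sub_pos.2 hp.2) _)) (betaPDF_pos hr hs hp)
  have hstrict : StrictMonoOn (cpLower n X) (Ioo 0 1) ∨ StrictAntiOn (cpUpper n X) (Ioo 0 1) := by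
    rcases eq_or_ne X 0 with rfl | hX0
    · exact Or.inr (strictAntiOn_cpUpper hn)
    · exact Or.inl (strictMonoOn_cpLower hX0 hX)
  exact ⟨continuousOn_intervalIntegral_of_endpoints hw (continuousOn_cpLower hX)
      (continuousOn_cpUpper hX) (mapsTo_cpLower hX) (mapsTo_cpUpper hX),
    strictAntiOn_intervalIntegral_of_endpoints hw hpos (monotoneOn_cpLower hX)
      (antitoneOn_cpUpper hX) (mapsTo_cpLower hX) (mapsTo_cpUpper hX) hstrict⟩
end
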